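/- arXiv:1609.05146 — 7 statements merged into one kernel-verified Lean document; each statement's English description precedes it below -/
import Mathlib

section
/- The function Q(x) = (3 / cosh^2(2x))^{1/4} is a positive, even, smooth solution of the ordinary differential equation Q'' - Q + Q^5 = 0 on the real line. -/
theorem stmt_0 (Q : ℝ → ℝ)
    (hQ : ∀ x, Q x = (3 / Real.cosh (2 * x) ^ 2) ^ ((1 : ℝ) / 4)) :
    (∀ x, 0 < Q x) ∧ (∀ x, Q (-x) = Q x) ∧ ContDiff ℝ (⊤ : ℕ∞) Q ∧
      (∀ x, deriv (deriv Q) x - Q x + Q x ^ 5 = 0) := by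
  have hc : ∀ x : ℝ, 0 < Real.cosh (2 * x) := fun x => Real.cosh_pos (2*x)
  have hQf : ∀ x, Q x = (3:ℝ) ^ ((1:ℝ)/4) * Real.cosh (2*x) ^ (-(1/2) : ℝ) := by
    intro x
    rw [hQ x, Real.div_rpow (by norm_num) (sq_nonneg _),
        ← Real.rpow_natCast (Real.cosh (2*x)) 2,
        ← Real.rpow_mul (hc x).le, div_eq_mul_inv, ← Real.rpow_neg (hc x).le]
    norm_num
  have h1 : ∀ x : ℝ, HasDerivAt (fun x : ℝ => 2*x) 2 x := by
    intro x; simpa using (hasDerivAt_id x).const_mul (2:ℝ)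
  have h2 : ∀ x : ℝ, HasDerivAt (fun x => Real.cosh (2*x)) (Real.sinh (2*x) * 2) x :=
    fun x => (Real.hasDerivAt_cosh (2*x)).comp x (h1 x)
  have hs : ∀ x : ℝ, HasDerivAt (fun x => Real.sinh (2*x)) (Real.cosh (2*x) * 2) x :=
    fun x => (Real.hasDerivAt_sinh (2*x)).comp x (h1 x)
  have hderiv1 : ∀ x : ℝ, HasDerivAt Q
      (-((3:ℝ)^((1:ℝ)/4)) * (Real.sinh (2*x) * Real.cosh (2*x) ^ ((-3/2):ℝ))) x := by
    intro x
    have h3 := ((h2 x).rpow_const (p := (-(1/2):ℝ)) (Or.inl (hc x).ne')).const_mul ((3:ℝ)^((1:ℝ)/4))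
    have : Q = fun x => (3:ℝ) ^ ((1:ℝ)/4) * Real.cosh (2*x) ^ (-(1/2) : ℝ) := funext hQf
    rw [this]
    refine h3.congr_deriv ?_
    rw [show (-(1/2):ℝ) - 1 = -3/2 by norm_num]
    ring
  have hD1 : deriv Q = fun x =>
      -((3:ℝ)^((1:ℝ)/4)) * (Real.sinh (2*x) * Real.cosh (2*x) ^ ((-3/2):ℝ)) :=
    funext fun x => (hderiv1 x).deriv
  have hderiv2 : ∀ x : ℝ, HasDerivAt (deriv Q)
      (-((3:ℝ)^((1:ℝ)/4)) * (Real.cosh (2*x) * 2 * Real.cosh (2*x) ^ ((-3/2):ℝ)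
        + Real.sinh (2*x) * (Real.sinh (2*x) * 2 * (-3/2) * Real.cosh (2*x) ^ ((-5/2):ℝ)))) x := by
    intro x
    rw [hD1]
    have hp := (h2 x).rpow_const (p := (-3/2:ℝ)) (Or.inl (hc x).ne')
    have := ((hs x).mul hp).const_mul (-((3:ℝ)^((1:ℝ)/4)))
    refine this.congr_deriv ?_
    norm_num
  refine ⟨fun x => ?_, fun x => ?_, ?_, fun x => ?_⟩
  · rw [hQ x]; exact Real.rpow_pos_of_pos (by positivity) _
  · rw [hQ, hQ, mul_neg, Real.cosh_neg]
  · rw [funext hQf]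
    rw [contDiff_iff_contDiffAt]
    intro x
    exact (contDiffAt_const).mul
      (((Real.contDiff_cosh.comp (contDiff_const.mul contDiff_id)).contDiffAt).rpow_const_of_ne (hc x).ne')
  · rw [(hderiv2 x).deriv, hQf x]
    have hA : Real.cosh (2*x) ^ ((-3/2):ℝ)
        = Real.cosh (2*x) ^ ((-5/2):ℝ) * Real.cosh (2*x) := by
      rw [show ((-3/2):ℝ) = -5/2 + 1 by norm_num, Real.rpow_add (hc x), Real.rpow_one]
    have hB : Real.cosh (2*x) ^ ((-(1/2)):ℝ)
        = Real.cosh (2*x) ^ ((-5/2):ℝ) * Real.cosh (2*x) ^ 2 := by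
      rw [show ((-(1/2)):ℝ) = -5/2 + 2 by norm_num, Real.rpow_add (hc x),
          Real.rpow_two]
    have hC : (Real.cosh (2*x) ^ ((-(1/2)):ℝ)) ^ 5
        = Real.cosh (2*x) ^ ((-5/2):ℝ) := by
      rw [← Real.rpow_natCast (Real.cosh (2*x) ^ ((-(1/2)):ℝ)) 5,
          ← Real.rpow_mul (hc x).le]
      norm_num
    have hD : ((3:ℝ)^((1:ℝ)/4)) ^ 5 = 3 * (3:ℝ)^((1:ℝ)/4) := by
      rw [← Real.rpow_natCast ((3:ℝ)^((1:ℝ)/4)) 5, ← Real.rpow_mul (by norm_num : (0:ℝ) ≤ 3)]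
      rw [show ((1:ℝ)/4 * (5:ℕ)) = 1 + 1/4 by push_cast; norm_num,
          Real.rpow_add (by norm_num : (0:ℝ) < 3), Real.rpow_one]
    have hs2 : Real.sinh (2*x) ^ 2 = Real.cosh (2*x) ^ 2 - 1 := Real.sinh_sq _
    rw [mul_pow, hC, hD, hA, hB]
    linear_combination (3 * (3:ℝ)^((1:ℝ)/4) * Real.cosh (2*x) ^ ((-5/2):ℝ)) * hs2
end

section
/- Let E(u) = (1/2)∫ u_x² − (1/6)∫ u⁶ + (γ/(q+1))∫ |u|^{q+1} with γ > 0 and q > 5. Then there is a constant C depending only on q such that for every u ∈ H¹(ℝ), ‖u_x‖_{L²}² ≤ C(|E(u)| + γ^{−4/(q−5)} ‖u‖_{L²}²). In particular the H¹ norm of u is controlled by its mass and energy. -/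
open MeasureTheory

/-!
A pointwise interpolation replaces Gagliardo–Nirenberg: splitting according to `|u| ≤ M` or
`|u| > M` gives `u⁶ ≤ M⁴ u² + M^(5-q) |u|^(q+1)`. For `M` with `M^(5-q) = 6γ/(q+1)` the last term,
integrated, is cancelled exactly by the defocusing part of the energy, leaving
`½ ‖u'‖² ≤ |E(u)| + ⅙ M⁴ ‖u‖²` with `M⁴ = ((q+1)/6)^(4/(q-5)) γ^(-4/(q-5))`.
-/

theorem rpow_le_rpow_add_rpow {x M p s r : ℝ} (hx : 0 ≤ x) (hM : 0 < M) (hs : 0 < s)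
    (hps : p ≤ s) (hsr : s ≤ r) :
    x ^ s ≤ M ^ (s - p) * x ^ p + M ^ (s - r) * x ^ r := by
  rcases hx.eq_or_lt with rfl | hx
  · rw [Real.zero_rpow hs.ne']
    positivity
  rcases le_or_gt x M with hxM | hxM
  · calc x ^ s = x ^ (s - p) * x ^ p := by rw [← Real.rpow_add hx, sub_add_cancel]
      _ ≤ M ^ (s - p) * x ^ p := by gcongr
      _ ≤ _ := le_add_of_nonneg_right (by positivity)
  · calc x ^ s = x ^ (s - r) * x ^ r := by rw [← Real.rpow_add hx, sub_add_cancel]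
      _ ≤ M ^ (s - r) * x ^ r := mul_le_mul_of_nonneg_right
          (Real.rpow_le_rpow_of_nonpos hM hxM.le (by linarith)) (by positivity)
      _ ≤ _ := le_add_of_nonneg_left (by positivity)

theorem integral_abs_rpow_le {α : Type*} [MeasurableSpace α] {μ : Measure α} {f : α → ℝ}
    {M p s r : ℝ} (hM : 0 < M) (hs : 0 < s) (hps : p ≤ s) (hsr : s ≤ r)
    (hp_int : Integrable (fun x => |f x| ^ p) μ) (hs_int : Integrable (fun x => |f x| ^ s) μ)
    (hr_int : Integrable (fun x => |f x| ^ r) μ) :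
    ∫ x, |f x| ^ s ∂μ ≤ M ^ (s - p) * ∫ x, |f x| ^ p ∂μ + M ^ (s - r) * ∫ x, |f x| ^ r ∂μ := by
  rw [← integral_const_mul, ← integral_const_mul,
    ← integral_add (hp_int.const_mul _) (hr_int.const_mul _)]
  exact integral_mono hs_int ((hp_int.const_mul _).add (hr_int.const_mul _))
    fun x => rpow_le_rpow_add_rpow (abs_nonneg _) hM hs hps hsr

theorem abs_rpow_of_even {n : ℕ} (hn : Even n) (x : ℝ) : |x| ^ (n : ℝ) = x ^ n := by
  rw [Real.rpow_natCast, hn.pow_abs]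

theorem div_rpow_one_div_rpow {c γ : ℝ} (hc : 0 ≤ c) (hγ : 0 ≤ γ) (a b : ℝ) :
    ((c / γ) ^ (1 / a)) ^ b = c ^ (b / a) * γ ^ (-(b / a)) := by
  rw [← Real.rpow_mul (div_nonneg hc hγ), Real.div_rpow hc hγ, Real.rpow_neg hγ,
    one_div_mul_eq_div, div_eq_mul_inv]

theorem integral_pow_six_le {α : Type*} [MeasurableSpace α] {μ : Measure α} {f : α → ℝ}
    {M r : ℝ} (hM : 0 < M) (hr : 6 ≤ r) (h2 : Integrable (fun x => f x ^ 2) μ)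
    (h6 : Integrable (fun x => f x ^ 6) μ) (hr_int : Integrable (fun x => |f x| ^ r) μ) :
    ∫ x, f x ^ 6 ∂μ ≤ M ^ 4 * ∫ x, f x ^ 2 ∂μ + M ^ (6 - r) * ∫ x, |f x| ^ r ∂μ := by
  have h := integral_abs_rpow_le (p := ((2 : ℕ) : ℝ)) (s := ((6 : ℕ) : ℝ)) hM
    (by norm_num) (by norm_num) (by exact_mod_cast hr)
    (by simpa only [abs_rpow_of_even even_two] using h2)
    (by simpa only [abs_rpow_of_even (by decide : Even 6)] using h6) hr_int
  rw [show ((6 : ℕ) : ℝ) - ((2 : ℕ) : ℝ) = ((4 : ℕ) : ℝ) by norm_num, Real.rpow_natCast] at h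
  simp only [abs_rpow_of_even even_two, abs_rpow_of_even (by decide : Even 6)] at h
  simpa only [Nat.cast_ofNat] using h

theorem stmt_3 (q : ℝ) (hq : 5 < q) :
    ∃ C > 0, ∀ γ : ℝ, 0 < γ → ∀ u : ℝ → ℝ, Differentiable ℝ u →
      Integrable (fun x => (u x) ^ 2) → Integrable (fun x => (deriv u x) ^ 2) →
      Integrable (fun x => (u x) ^ 6) → Integrable (fun x => |u x| ^ (q + 1)) →
      (∫ x, (deriv u x) ^ 2) ≤
        C * (|(1 / 2) * (∫ x, (deriv u x) ^ 2) - (1 / 6) * (∫ x, (u x) ^ 6)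
              + (γ / (q + 1)) * (∫ x, |u x| ^ (q + 1))|
            + γ ^ (-(4 / (q - 5))) * (∫ x, (u x) ^ 2)) := by
  have hc : 0 < (q + 1) / 6 := by linarith
  set K := ((q + 1) / 6) ^ (4 / (q - 5))
  have hK : 0 < K := by positivity
  refine ⟨2 + K / 3, by positivity, fun γ hγ u _ hu2 _ hu6 huq => ?_⟩
  -- `M` balances the two terms of the interpolation: `M ^ (5 - q) = 6 γ / (q + 1)`.
  set M := ((q + 1) / 6 / γ) ^ (1 / (q - 5))
  have hM4 : M ^ 4 = K * γ ^ (-(4 / (q - 5))) := by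
    rw [← Real.rpow_natCast, div_rpow_one_div_rpow hc.le hγ.le]
    norm_num [K]
  have hMq : M ^ (6 - (q + 1)) = 6 * (γ / (q + 1)) := by
    rw [show 6 - (q + 1) = -(q - 5) by ring, div_rpow_one_div_rpow hc.le hγ.le, neg_div,
      div_self (by linarith), neg_neg, Real.rpow_neg_one, Real.rpow_one]
    field_simp
  have hS := integral_pow_six_le (by positivity : 0 < M) (by linarith) hu2 hu6 huq
  rw [hM4, hMq] at hS
  set E := (1 / 2) * (∫ x, (deriv u x) ^ 2) - (1 / 6) * (∫ x, (u x) ^ 6)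
    + (γ / (q + 1)) * (∫ x, |u x| ^ (q + 1)) with hE_def
  have hm : 0 ≤ γ ^ (-(4 / (q - 5))) * ∫ x, u x ^ 2 :=
    mul_nonneg (by positivity) (integral_nonneg fun x => by positivity)
  calc (∫ x, deriv u x ^ 2) ≤ 2 * |E| + K / 3 * (γ ^ (-(4 / (q - 5))) * ∫ x, u x ^ 2) := by
        linarith [le_abs_self E]
    _ ≤ _ := by nlinarith [abs_nonneg E]
end

section
/- Let L f = −f'' + f − 5Q⁴f where Q(x) = (3/cosh²(2x))^{1/4}. Then LQ' = 0 and LQ³ = −8Q³. -/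
/-!
Writing `t = tanh (2x)`, one has `Q⁴ = 3 (1 - t²)` and `Q' = -t Q`. Differentiating once more gives
the ground-state equation `Q'' = Q - Q⁵` and the first integral `Q'² = Q² - Q⁶ / 3`. Differentiating
the ground-state equation gives `L Q' = 0`; expanding `(Q³)'' = 6 Q Q'² + 3 Q² Q''` and using both
identities gives `(Q³)'' = 9 Q³ - 5 Q⁷`, whence `L Q³ = -8 Q³`.
-/

open Real

namespace Real

theorem one_sub_tanh_sq (x : ℝ) : 1 - tanh x ^ 2 = (cosh x ^ 2)⁻¹ := by
  have hc : cosh x ≠ 0 := (cosh_pos x).ne'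
  rw [tanh_eq_sinh_div_cosh]
  field_simp
  linear_combination cosh_sq_sub_sinh_sq x

theorem hasDerivAt_tanh (x : ℝ) : HasDerivAt tanh (1 - tanh x ^ 2) x := by
  have htanh : (fun y => sinh y / cosh y) = tanh :=
    funext fun y => (tanh_eq_sinh_div_cosh y).symm
  refine htanh ▸ ((hasDerivAt_sinh x).fun_div (hasDerivAt_cosh x) (cosh_pos x).ne').congr_deriv ?_
  beta_reduce
  rw [← tanh_eq_sinh_div_cosh, one_sub_tanh_sq, ← one_div, ← cosh_sq_sub_sinh_sq x]
  ring

theorem hasDerivAt_tanh_two_mul (x : ℝ) :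
    HasDerivAt (fun y => tanh (2 * y)) (2 * (1 - tanh (2 * x) ^ 2)) x := by
  refine ((hasDerivAt_tanh (2 * x)).comp x ((hasDerivAt_id x).const_mul 2)).congr_deriv ?_
  simp only [mul_one]
  ring

end Real

/-- The linearization of `Q'' - Q + Q⁵ = 0` at `Q`. -/
noncomputable def linearizedOp (Q f : ℝ → ℝ) (x : ℝ) : ℝ :=
  -(deriv (deriv f) x) + f x - 5 * Q x ^ 4 * f x

section GroundStateEquation

variable {Q Q' : ℝ → ℝ} (hQ : ∀ x, HasDerivAt Q (Q' x) x)
  (hQ' : ∀ x, HasDerivAt Q' (Q x - Q x ^ 5) x)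
include hQ hQ'

theorem linearizedOp_deriv_eq_zero (x : ℝ) : linearizedOp Q (deriv Q) x = 0 := by
  have hderiv : deriv Q = Q' := funext fun y => (hQ y).deriv
  have hderiv2 : deriv Q' = fun y => Q y - Q y ^ 5 := funext fun y => (hQ' y).deriv
  have hderiv3 : HasDerivAt (fun y => Q y - Q y ^ 5) (Q' x - 5 * Q x ^ 4 * Q' x) x := by
    refine ((hQ x).fun_sub ((hQ x).fun_pow 5)).congr_deriv ?_
    norm_num
  rw [linearizedOp, hderiv, hderiv2, hderiv3.deriv]
  ring

theorem linearizedOp_cube (henergy : ∀ x, Q' x ^ 2 = Q x ^ 2 - Q x ^ 6 / 3) (x : ℝ) :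
    linearizedOp Q (fun y => Q y ^ 3) x = -8 * Q x ^ 3 := by
  have hderiv : deriv (fun y => Q y ^ 3) = fun y => 3 * Q y ^ 2 * Q' y := by
    funext y
    refine (((hQ y).fun_pow 3).congr_deriv ?_).deriv
    norm_num
  have hderiv2 : HasDerivAt (fun y => 3 * Q y ^ 2 * Q' y)
      (6 * Q x * Q' x ^ 2 + 3 * Q x ^ 2 * (Q x - Q x ^ 5)) x := by
    refine ((((hQ x).fun_pow 2).const_mul 3).fun_mul (hQ' x)).congr_deriv ?_
    norm_num
    ring
  rw [linearizedOp, hderiv, hderiv2.deriv]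
  linear_combination -6 * Q x * henergy x

end GroundStateEquation

section Soliton

variable {Q : ℝ → ℝ} (hQ : ∀ x, Q x = (3 / cosh (2 * x) ^ 2) ^ ((1 : ℝ) / 4))
include hQ

theorem soliton_eq (x : ℝ) : Q x = (3 * (1 - tanh (2 * x) ^ 2)) ^ ((1 : ℝ) / 4) := by
  rw [hQ, one_sub_tanh_sq, div_eq_mul_inv]

theorem soliton_pow_four (x : ℝ) : Q x ^ 4 = 3 * (1 - tanh (2 * x) ^ 2) := by
  have hpos : 0 ≤ 3 * (1 - tanh (2 * x) ^ 2) := by rw [one_sub_tanh_sq]; positivity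
  rw [soliton_eq hQ, one_div]
  exact_mod_cast Real.rpow_inv_natCast_pow hpos four_ne_zero

theorem hasDerivAt_soliton (x : ℝ) : HasDerivAt Q (-Q x * tanh (2 * x)) x := by
  set g : ℝ → ℝ := fun y => 3 * (1 - tanh (2 * y) ^ 2) with hg
  have hgpos : 0 < g x := by simp only [hg, one_sub_tanh_sq]; positivity
  have hgderiv : HasDerivAt g (-4 * tanh (2 * x) * g x) x := by
    refine (((hasDerivAt_tanh_two_mul x).fun_pow 2).const_sub 1 |>.const_mul 3).congr_deriv ?_
    simp only [hg]
    ring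
  rw [show Q = fun y => g y ^ ((1 : ℝ) / 4) from funext (soliton_eq hQ)]
  beta_reduce
  refine (hgderiv.rpow_const (Or.inl hgpos.ne')).congr_deriv ?_
  rw [Real.rpow_sub_one hgpos.ne']
  field_simp

theorem hasDerivAt_neg_soliton_mul_tanh (x : ℝ) :
    HasDerivAt (fun y => -Q y * tanh (2 * y)) (Q x - Q x ^ 5) x := by
  refine ((hasDerivAt_soliton hQ x).fun_neg.fun_mul (hasDerivAt_tanh_two_mul x)).congr_deriv ?_
  linear_combination Q x * soliton_pow_four hQ x

theorem soliton_energy (x : ℝ) : (-Q x * tanh (2 * x)) ^ 2 = Q x ^ 2 - Q x ^ 6 / 3 := by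
  linear_combination (Q x ^ 2 / 3) * soliton_pow_four hQ x

end Soliton

theorem stmt_7 (Q : ℝ → ℝ)
    (hQ : ∀ x, Q x = (3 / Real.cosh (2 * x) ^ 2) ^ ((1 : ℝ) / 4)) :
    (∀ x, -(deriv (deriv (deriv Q)) x) + deriv Q x - 5 * Q x ^ 4 * deriv Q x = 0) ∧
    (∀ x, -(deriv (deriv (fun y => Q y ^ 3)) x) + Q x ^ 3 - 5 * Q x ^ 4 * Q x ^ 3
      = -8 * Q x ^ 3) :=
  ⟨linearizedOp_deriv_eq_zero (hasDerivAt_soliton hQ) (hasDerivAt_neg_soliton_mul_tanh hQ),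
    linearizedOp_cube (hasDerivAt_soliton hQ) (hasDerivAt_neg_soliton_mul_tanh hQ)
      (soliton_energy hQ)⟩
end

section
/- ODE comparison lemma (lower bound): let F : [0, x₀) → (0, ∞) be C¹, ν > 0, L > 0. If F'(x) + F(x)^{1+ν} ≥ L for all x ∈ [0, x₀), then F(x) ≥ min(F(0), L^{1/(1+ν)}) for all x ∈ [0, x₀). -/
theorem stmt_9 (x₀ : EReal) (hx₀ : 0 < x₀) (F : ℝ → ℝ) (ν L : ℝ)
    (hν : 0 < ν) (hL : 0 < L)
    (hpos : ∀ x : ℝ, 0 ≤ x → (x : EReal) < x₀ → 0 < F x)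
    (hC1 : ContDiffOn ℝ 1 F {x : ℝ | 0 ≤ x ∧ (x : EReal) < x₀})
    (hODE : ∀ x : ℝ, 0 ≤ x → (x : EReal) < x₀ → L ≤ deriv F x + F x ^ (1 + ν)) :
    ∀ x : ℝ, 0 ≤ x → (x : EReal) < x₀ →
      min (F 0) (L ^ (1 / (1 + ν))) ≤ F x := by
  intro x hx hxlt
  by_contra hFx
  push_neg at hFx
  set m := min (F 0) (L ^ (1 / (1 + ν))) with hm
  have h1ν : (0:ℝ) < 1 + ν := by linarith
  have hmL : m ≤ L ^ (1 / (1 + ν)) := min_le_right _ _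
  have hsub : Set.Icc 0 x ⊆ {x : ℝ | 0 ≤ x ∧ (x : EReal) < x₀} := by
    intro t ht
    exact ⟨ht.1, lt_of_le_of_lt (by exact_mod_cast ht.2) hxlt⟩
  have hcont : ContinuousOn F (Set.Icc 0 x) := (hC1.continuousOn).mono hsub
  set S := Set.Icc 0 x ∩ F ⁻¹' Set.Ici m with hS
  have hScl : IsClosed S := hcont.preimage_isClosed_of_isClosed isClosed_Icc isClosed_Ici
  have h0S : (0:ℝ) ∈ S := ⟨⟨le_refl 0, hx⟩, show m ≤ F 0 from min_le_left _ _⟩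
  have hbdd : BddAbove S := ⟨x, fun t ht => ht.1.2⟩
  set c := sSup S with hc
  have hcS : c ∈ S := hScl.csSup_mem ⟨0, h0S⟩ hbdd
  have hc0 : 0 ≤ c := hcS.1.1
  have hcx : c ≤ x := hcS.1.2
  have hcFm : m ≤ F c := hcS.2
  have hcxlt : c < x := lt_of_le_of_ne hcx (by intro h; rw [h] at hcFm; exact absurd hFx (not_lt.2 hcFm))
  have hlt : ∀ t, c < t → t ≤ x → F t < m := by
    intro t hct htx
    by_contra h
    push_neg at h
    exact absurd (le_csSup hbdd ⟨⟨hc0.trans hct.le, htx⟩, h⟩) (not_le.2 hct)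
  have hsub2 : Set.Icc c x ⊆ Set.Icc 0 x := Set.Icc_subset_Icc hc0 le_rfl
  have hmono : StrictMonoOn F (Set.Icc c x) := by
    apply strictMonoOn_of_deriv_pos (convex_Icc c x) (hcont.mono hsub2)
    intro t ht
    rw [interior_Icc] at ht
    have ht0 : 0 ≤ t := hc0.trans ht.1.le
    have htx₀ : (t : EReal) < x₀ :=
      lt_of_le_of_lt (by exact_mod_cast ht.2.le) hxlt
    have hFt : 0 < F t := hpos t ht0 htx₀
    have hFtm : F t < m := hlt t ht.1 ht.2.le
    have hpow : F t ^ (1 + ν) < L := by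
      have h2 : F t ^ (1 + ν) < (L ^ (1 / (1 + ν))) ^ (1 + ν) :=
        Real.rpow_lt_rpow hFt.le (lt_of_lt_of_le hFtm hmL) h1ν
      rwa [← Real.rpow_mul hL.le, one_div_mul_cancel h1ν.ne', Real.rpow_one] at h2
    have := hODE t ht0 htx₀
    linarith
  have := hmono ⟨le_rfl, hcx⟩ ⟨hcx, le_rfl⟩ hcxlt
  linarith
end

section
/- Computation of (ΛP, Q): if P satisfies (LP)' = ΛQ with L f = −f'' + f − 5Q⁴f, and P, P' decay suitably with lim_{y→−∞}P(y) = (1/2)∫Q, lim_{y→+∞}P(y)=0, then ∫ [ (10P²Q³)' + ΛP ] Q dy = (1/8)(∫Q)². -/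
open MeasureTheory
open scoped ContDiff

private lemma abs_mul_le' {a b A B : ℝ} (ha : |a| ≤ A) (hb : |b| ≤ B) : |a * b| ≤ A * B := by
  rw [abs_mul]
  exact mul_le_mul ha hb (abs_nonneg b) ((abs_nonneg a).trans ha)

private lemma tendsto_zero_of_abs_mul_bound {f : ℝ → ℝ} {C : ℝ}
    (h : ∀ x, |x| * |f x| ≤ C) :
    Filter.Tendsto f Filter.atTop (nhds 0) ∧ Filter.Tendsto f Filter.atBot (nhds 0) := by
  have key : ∀ x : ℝ, 1 ≤ |x| → ‖f x‖ ≤ C / |x| := by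
    intro x hx
    have hx0 : (0:ℝ) < |x| := lt_of_lt_of_le one_pos hx
    rw [Real.norm_eq_abs, le_div_iff₀ hx0, mul_comm]
    exact h x
  constructor
  · refine squeeze_zero_norm' (a := fun x => C / |x|) ?_ ((tendsto_const_nhds (x := C)).div_atTop Filter.tendsto_abs_atTop_atTop)
    filter_upwards [Filter.eventually_ge_atTop (1:ℝ)] with x hx
    exact key x (le_trans hx (le_abs_self x))
  · refine squeeze_zero_norm' (a := fun x => C / |x|) ?_ ((tendsto_const_nhds (x := C)).div_atTop Filter.tendsto_abs_atBot_atTop)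
    filter_upwards [Filter.eventually_le_atBot (-1:ℝ)] with x hx
    exact key x (by rw [abs_of_nonpos (by linarith)]; linarith)

private lemma schwartz_abs_mul_bound (f : SchwartzMap ℝ ℝ) (k : ℕ) :
    ∃ C, ∀ x, |x| ^ k * |f x| ≤ C := by
  obtain ⟨C, _, hC⟩ := f.decay k 0
  exact ⟨C, fun x => by simpa [Real.norm_eq_abs] using hC x⟩

private lemma schwartz_tendsto_zero (f : SchwartzMap ℝ ℝ) :
    Filter.Tendsto f Filter.atTop (nhds 0) ∧ Filter.Tendsto f Filter.atBot (nhds 0) := by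
  obtain ⟨C, hC⟩ := schwartz_abs_mul_bound f 1
  exact tendsto_zero_of_abs_mul_bound (by simpa using hC)

private lemma schwartz_mul_id_tendsto_zero (f : SchwartzMap ℝ ℝ) :
    Filter.Tendsto (fun x => x * f x) Filter.atTop (nhds 0) ∧
      Filter.Tendsto (fun x => x * f x) Filter.atBot (nhds 0) := by
  obtain ⟨C, hC⟩ := schwartz_abs_mul_bound f 2
  refine tendsto_zero_of_abs_mul_bound (C := C) ?_
  intro x
  have := hC x
  calc |x| * |x * f x| = |x| ^ 2 * |f x| := by rw [abs_mul]; ring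
  _ ≤ C := this

private lemma exp_decay_tendsto_zero (C : ℝ) :
    Filter.Tendsto (fun y : ℝ => C * Real.exp (-|y| / 2)) Filter.atTop (nhds 0) ∧
      Filter.Tendsto (fun y : ℝ => C * Real.exp (-|y| / 2)) Filter.atBot (nhds 0) := by
  have habs : ∀ l : Filter ℝ, Filter.Tendsto (fun y : ℝ => |y|) l Filter.atTop →
      Filter.Tendsto (fun y : ℝ => C * Real.exp (-|y| / 2)) l (nhds 0) := by
    intro l hl
    have h1 : Filter.Tendsto (fun y : ℝ => -|y| / 2) l Filter.atBot := by
      apply Filter.Tendsto.atBot_div_const (by norm_num : (0:ℝ) < 2)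
      exact Filter.tendsto_neg_atBot_iff.mpr hl
    have h2 : Filter.Tendsto (fun y : ℝ => Real.exp (-|y| / 2)) l (nhds 0) :=
      Real.tendsto_exp_atBot.comp h1
    simpa using h2.const_mul C
  exact ⟨habs _ Filter.tendsto_abs_atTop_atTop, habs _ Filter.tendsto_abs_atBot_atTop⟩

private lemma abs_mul_exp_le_two (y : ℝ) : |y| * Real.exp (-|y| / 2) ≤ 2 := by
  have h1 : |y| ≤ 2 * Real.exp (|y| / 2) := by
    nlinarith [Real.add_one_le_exp (|y| / 2), abs_nonneg y]
  have key : Real.exp (|y| / 2) * Real.exp (-|y| / 2) = 1 := by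
    rw [← Real.exp_add]; ring_nf; exact Real.exp_zero
  have h4 := mul_le_mul_of_nonneg_right h1 (Real.exp_pos (-|y| / 2)).le
  nlinarith [Real.exp_pos (-|y| / 2)]

theorem stmt_14 (Q : SchwartzMap ℝ ℝ) (P : ℝ → ℝ)
    (hQpos : ∀ x, 0 < Q x)
    (hQode : ∀ x, deriv (deriv ⇑Q) x - Q x + Q x ^ 5 = 0)
    (hP : ContDiff ℝ (⊤ : ℕ∞) P)
    (hPbd : ∃ C, ∀ y, |P y| ≤ C)
    (hP'decay : ∃ C, ∀ y, |deriv P y| ≤ C * Real.exp (-|y| / 2))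
    (hLP : ∀ y, deriv (fun z => -(deriv (deriv P) z) + P z - 5 * Q z ^ 4 * P z) y
      = (1 / 2) * Q y + y * deriv (⇑Q) y)
    (hlim : Filter.Tendsto P Filter.atBot (nhds ((1 / 2) * ∫ x : ℝ, Q x)))
    (hPright : ∃ C, ∀ y : ℝ, 0 ≤ y → |P y| ≤ C * Real.exp (-y / 2)) :
    ∫ y : ℝ, (deriv (fun z => 10 * P z ^ 2 * Q z ^ 3) y
        + ((1 / 2) * P y + y * deriv P y)) * Q y
      = (1 / 8) * (∫ y : ℝ, Q y) ^ 2 := by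
  obtain ⟨C₁, hC₁⟩ := hPbd
  obtain ⟨C₂, hC₂⟩ := hP'decay
  obtain ⟨C₃, hC₃⟩ := hPright
  have hC₂0 : 0 ≤ C₂ := le_trans (abs_nonneg _) (by simpa using hC₂ 0)
  -- smoothness facts
  have hPd : Differentiable ℝ P := hP.differentiable (by simp)
  have hPinf : ContDiff ℝ ∞ P := hP.of_le (by simp)
  have hP1 : ContDiff ℝ ∞ (deriv P) := (contDiff_infty_iff_deriv.mp hPinf).2
  have hP'd : Differentiable ℝ (deriv P) := hP1.differentiable (by norm_num)
  have hP2 : ContDiff ℝ ∞ (deriv (deriv P)) := (contDiff_infty_iff_deriv.mp hP1).2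
  have hP''d : Differentiable ℝ (deriv (deriv P)) := hP2.differentiable (by norm_num)
  have hQd : Differentiable ℝ (⇑Q) := Q.differentiable
  have hPder : ∀ y, HasDerivAt P (deriv P y) y := fun y => (hPd y).hasDerivAt
  have hP'der : ∀ y, HasDerivAt (deriv P) (deriv (deriv P) y) y := fun y => (hP'd y).hasDerivAt
  have hQder : ∀ y, HasDerivAt (⇑Q) (deriv (⇑Q) y) y := fun y => (hQd y).hasDerivAt
  -- bounds on Q and its derivative
  obtain ⟨D₀, hD₀⟩ : ∃ C, ∀ x, |Q x| ≤ C := by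
    obtain ⟨C, hC⟩ := schwartz_abs_mul_bound Q 0
    exact ⟨C, fun x => by simpa using hC x⟩
  obtain ⟨D₁, hD₁⟩ : ∃ C, ∀ x, |deriv (⇑Q) x| ≤ C := by
    obtain ⟨C, hC⟩ := schwartz_abs_mul_bound (SchwartzMap.derivCLM ℝ ℝ Q) 0
    exact ⟨C, fun x => by simpa [SchwartzMap.derivCLM_apply] using hC x⟩
  have hQint : Integrable (⇑Q) := Q.integrable
  -- bound on deriv P and y * deriv P
  have hP'bd : ∀ y, |deriv P y| ≤ C₂ := by
    intro y
    have h1 : Real.exp (-|y| / 2) ≤ 1 := by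
      apply Real.exp_le_one_iff.mpr
      have := abs_nonneg y
      linarith
    nlinarith [hC₂ y, Real.exp_pos (-|y| / 2)]
  have hyP' : ∀ y, |y * deriv P y| ≤ 2 * C₂ := by
    intro y
    rw [abs_mul]
    have h1 : |y| * |deriv P y| ≤ |y| * (C₂ * Real.exp (-|y| / 2)) :=
      mul_le_mul_of_nonneg_left (hC₂ y) (abs_nonneg y)
    have h2 := abs_mul_exp_le_two y
    nlinarith [Real.exp_pos (-|y| / 2), abs_nonneg y]
  -- the explicit derivative of 10 P² Q³
  have hd10 : ∀ y, HasDerivAt (fun z => 10 * P z ^ 2 * Q z ^ 3)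
      (20 * P y * deriv P y * Q y ^ 3 + 30 * P y ^ 2 * Q y ^ 2 * deriv (⇑Q) y) y := by
    intro y
    have h := (((hPder y).fun_pow 2).const_mul (10:ℝ)).mul ((hQder y).fun_pow 3)
    refine h.congr_deriv ?_
    push_cast
    ring
  have hderiv10 : ∀ y, deriv (fun z => 10 * P z ^ 2 * Q z ^ 3) y
      = 20 * P y * deriv P y * Q y ^ 3 + 30 * P y ^ 2 * Q y ^ 2 * deriv (⇑Q) y :=
    fun y => (hd10 y).deriv
  -- the antiderivative S of Q
  set S : ℝ → ℝ := fun y => ∫ t in (0:ℝ)..y, Q t with hSdef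
  have hSder : ∀ y, HasDerivAt S (Q y) y := fun y =>
    (Q.continuous.integral_hasStrictDerivAt 0 y).hasDerivAt
  -- the key identity for LP
  set A : ℝ := -(deriv (deriv P) 0) + P 0 - 5 * Q 0 ^ 4 * P 0 with hAdef
  have hKey : ∀ y, -(deriv (deriv P) y) + P y - 5 * Q y ^ 4 * P y = A + y * Q y - S y / 2 := by
    have hLPdiff : Differentiable ℝ (fun z => -(deriv (deriv P) z) + P z - 5 * Q z ^ 4 * P z) :=
      fun z => ((((hP''d z).neg.add (hPd z)).sub ((((hQd z).pow 4).const_mul 5).mul (hPd z))))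
    have hg : ∀ y, HasDerivAt (fun y => y * Q y - S y / 2) (1 * Q y + y * deriv (⇑Q) y - Q y / 2) y := by
      intro y
      exact ((hasDerivAt_id y).mul (hQder y)).sub ((hSder y).div_const 2)
    have hgdiff : Differentiable ℝ (fun y => (-(deriv (deriv P) y) + P y - 5 * Q y ^ 4 * P y)
        - (y * Q y - S y / 2)) := fun y => (hLPdiff y).sub (hg y).differentiableAt
    have hgderiv : ∀ y, deriv (fun y => (-(deriv (deriv P) y) + P y - 5 * Q y ^ 4 * P y)
        - (y * Q y - S y / 2)) y = 0 := by
      intro y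
      rw [deriv_fun_sub (hLPdiff y) (hg y).differentiableAt, hLP y, (hg y).deriv]
      ring
    have hconst := fun y => is_const_of_deriv_eq_zero hgdiff hgderiv y 0
    intro y
    have h0 := hconst y
    have hS0 : S 0 = 0 := intervalIntegral.integral_same
    simp only [hS0] at h0
    rw [hAdef]
    linarith
  have hP'' : ∀ y, deriv (deriv P) y = P y - 5 * Q y ^ 4 * P y - A - y * Q y + S y / 2 := by
    intro y
    have := hKey y
    linarith
  -- limits
  have hQtop := (schwartz_tendsto_zero Q).1
  have hQbot := (schwartz_tendsto_zero Q).2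
  have hyQtop := (schwartz_mul_id_tendsto_zero Q).1
  have hP'top : Filter.Tendsto (deriv P) Filter.atTop (nhds 0) :=
    squeeze_zero_norm' (Filter.Eventually.of_forall fun y => by simpa using hC₂ y)
      (exp_decay_tendsto_zero C₂).1
  have hP'bot : Filter.Tendsto (deriv P) Filter.atBot (nhds 0) :=
    squeeze_zero_norm' (Filter.Eventually.of_forall fun y => by simpa using hC₂ y)
      (exp_decay_tendsto_zero C₂).2
  have hPtop : Filter.Tendsto P Filter.atTop (nhds 0) := by
    refine squeeze_zero_norm' ?_ (a := fun y : ℝ => C₃ * Real.exp (-|y| / 2))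
      (exp_decay_tendsto_zero C₃).1
    filter_upwards [Filter.eventually_ge_atTop (0:ℝ)] with y hy
    simpa [abs_of_nonneg hy] using hC₃ y hy
  set I : ℝ := ∫ x : ℝ, Q x with hIdef
  set Sp : ℝ := ∫ x in Set.Ioi (0:ℝ), Q x with hSpdef
  set Sm : ℝ := ∫ x in Set.Iic (0:ℝ), Q x with hSmdef
  have hStop : Filter.Tendsto S Filter.atTop (nhds Sp) :=
    intervalIntegral_tendsto_integral_Ioi 0 hQint.integrableOn Filter.tendsto_id
  have hSbot : Filter.Tendsto S Filter.atBot (nhds (-Sm)) := by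
    have h := intervalIntegral_tendsto_integral_Iic 0 hQint.integrableOn
      (Filter.tendsto_id (α := ℝ))
    have := h.neg
    refine this.congr fun y => ?_
    rw [hSdef]
    show -(∫ t in y..(0:ℝ), Q t) = ∫ t in (0:ℝ)..y, Q t
    rw [intervalIntegral.integral_symm y 0]
  have hIsum : Sm + Sp = I := intervalIntegral.integral_Iic_add_Ioi hQint.integrableOn hQint.integrableOn
  -- limit of P'' at +infinity and the value of A
  have hA : A = Sp / 2 := by
    have hP''top : Filter.Tendsto (deriv (deriv P)) Filter.atTop (nhds (Sp / 2 - A)) := by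
      have h : Filter.Tendsto (fun y => P y - 5 * Q y ^ 4 * P y - A - y * Q y + S y / 2)
          Filter.atTop (nhds (0 - 5 * 0 ^ 4 * 0 - A - 0 + Sp / 2)) := by
        exact ((((hPtop.sub ((((hQtop.pow 4).const_mul 5)).mul hPtop)).sub
          tendsto_const_nhds).sub hyQtop).add (hStop.div_const 2))
      have h2 : (0:ℝ) - 5 * 0 ^ 4 * 0 - A - 0 + Sp / 2 = Sp / 2 - A := by ring
      rw [h2] at h
      exact h.congr fun y => (hP'' y).symm
    have hslope : ∀ n : ℕ, ∃ c ∈ Set.Ioo (n:ℝ) ((n:ℝ)+1),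
        deriv (deriv P) c = (deriv P ((n:ℝ)+1) - deriv P n) / (((n:ℝ)+1) - n) := by
      intro n
      exact exists_hasDerivAt_eq_slope (deriv P) (deriv (deriv P)) (by linarith)
        hP'd.continuous.continuousOn (fun x _ => hP'der x)
    choose ξ hξmem hξeq using hslope
    have hξtop : Filter.Tendsto ξ Filter.atTop Filter.atTop :=
      Filter.tendsto_atTop_mono (fun n => (hξmem n).1.le) tendsto_natCast_atTop_atTop
    have h1 : Filter.Tendsto (fun n => deriv (deriv P) (ξ n)) Filter.atTop
        (nhds (Sp / 2 - A)) := hP''top.comp hξtop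
    have h2 : Filter.Tendsto (fun n => deriv (deriv P) (ξ n)) Filter.atTop (nhds 0) := by
      have hplus : Filter.Tendsto (fun n : ℕ => ((n:ℝ)+1)) Filter.atTop Filter.atTop :=
        Filter.tendsto_atTop_add_const_right _ 1 tendsto_natCast_atTop_atTop
      have := (hP'top.comp hplus).sub (hP'top.comp tendsto_natCast_atTop_atTop)
      rw [sub_zero] at this
      refine this.congr fun n => ?_
      rw [hξeq n]
      simp
    have := tendsto_nhds_unique h1 h2
    linarith
  -- the antiderivative F of the integrand
  set F : ℝ → ℝ := fun y => 1/2 * P y ^ 2 + 15/2 * (Q y ^ 4 * P y ^ 2) - A * P y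
    + 1/2 * (P y * S y) - 1/2 * deriv P y ^ 2 with hFdef
  have hFder : ∀ y, HasDerivAt F ((deriv (fun z => 10 * P z ^ 2 * Q z ^ 3) y
      + ((1 / 2) * P y + y * deriv P y)) * Q y) y := by
    intro y
    have e1 := ((hPder y).fun_pow 2).const_mul (1/2 : ℝ)
    have e2 := (((hQder y).fun_pow 4).mul ((hPder y).fun_pow 2)).const_mul (15/2 : ℝ)
    have e3 := (hPder y).const_mul A
    have e4 := ((hPder y).mul (hSder y)).const_mul (1/2 : ℝ)
    have e5 := ((hP'der y).fun_pow 2).const_mul (1/2 : ℝ)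
    have H := (((e1.add e2).sub e3).add e4).sub e5
    refine H.congr_deriv ?_
    rw [hderiv10 y, hP'' y]
    push_cast
    ring
  have hFcont : Continuous F := by
    have : Differentiable ℝ F := fun y => (hFder y).differentiableAt
    exact this.continuous
  -- integrability of the integrand
  have hGint : Integrable (fun y => (deriv (fun z => 10 * P z ^ 2 * Q z ^ 3) y
      + ((1 / 2) * P y + y * deriv P y)) * Q y) := by
    have hcP : Continuous P := hP.continuous
    have hcP' : Continuous (deriv P) := hP1.continuous
    have hcQ : Continuous ⇑Q := Q.continuous
    have hcQ' : Continuous (deriv ⇑Q) :=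
      (SchwartzMap.derivCLM ℝ ℝ Q).continuous.congr fun x => SchwartzMap.derivCLM_apply ℝ Q x
    refine hQint.bdd_mul (c := 20 * C₁ * C₂ * D₀ ^ 3 + 30 * C₁ ^ 2 * D₀ ^ 2 * D₁ + (1/2 * C₁ + 2 * C₂)) ?_ ?_
    · apply Continuous.aestronglyMeasurable
      have hcont10 : Continuous (fun y => deriv (fun z => 10 * P z ^ 2 * Q z ^ 3) y) := by
        have : Continuous (fun y => 20 * P y * deriv P y * Q y ^ 3
            + 30 * P y ^ 2 * Q y ^ 2 * deriv (⇑Q) y) := by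
          fun_prop
        exact this.congr fun y => (hderiv10 y).symm
      fun_prop
    · refine Filter.Eventually.of_forall ?_
      intro y
      rw [Real.norm_eq_abs, hderiv10 y]
      have hC₁0 : 0 ≤ C₁ := le_trans (abs_nonneg _) (hC₁ 0)
      have hD₀0 : 0 ≤ D₀ := le_trans (abs_nonneg _) (hD₀ 0)
      have t1 : |20 * P y * deriv P y * Q y ^ 3| ≤ 20 * C₁ * C₂ * D₀ ^ 3 := by
        refine abs_mul_le' (abs_mul_le' (abs_mul_le' ?_ (hC₁ y)) (hP'bd y)) ?_
        · norm_num
        · rw [abs_pow]; exact pow_le_pow_left₀ (abs_nonneg _) (hD₀ y) 3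
      have t2 : |30 * P y ^ 2 * Q y ^ 2 * deriv (⇑Q) y| ≤ 30 * C₁ ^ 2 * D₀ ^ 2 * D₁ := by
        refine abs_mul_le' (abs_mul_le' (abs_mul_le' ?_ ?_) ?_) (hD₁ y)
        · norm_num
        · rw [abs_pow]; exact pow_le_pow_left₀ (abs_nonneg _) (hC₁ y) 2
        · rw [abs_pow]; exact pow_le_pow_left₀ (abs_nonneg _) (hD₀ y) 2
      have t3 : |1 / 2 * P y| ≤ 1/2 * C₁ := by
        refine abs_mul_le' ?_ (hC₁ y)
        exact le_of_eq (abs_of_nonneg (by norm_num))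
      have t4 := hyP' y
      calc |20 * P y * deriv P y * Q y ^ 3 + 30 * P y ^ 2 * Q y ^ 2 * deriv (⇑Q) y
          + (1 / 2 * P y + y * deriv P y)|
          ≤ |20 * P y * deriv P y * Q y ^ 3 + 30 * P y ^ 2 * Q y ^ 2 * deriv (⇑Q) y|
            + |1 / 2 * P y + y * deriv P y| := abs_add_le _ _
        _ ≤ (|20 * P y * deriv P y * Q y ^ 3| + |30 * P y ^ 2 * Q y ^ 2 * deriv (⇑Q) y|)
            + (|1 / 2 * P y| + |y * deriv P y|) :=
          add_le_add (abs_add_le _ _) (abs_add_le _ _)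
        _ ≤ 20 * C₁ * C₂ * D₀ ^ 3 + 30 * C₁ ^ 2 * D₀ ^ 2 * D₁ + (1/2 * C₁ + 2 * C₂) :=
          add_le_add (add_le_add t1 t2) (add_le_add t3 t4)
  -- limits of F
  have hFtop : Filter.Tendsto F Filter.atTop (nhds 0) := by
    have h : Filter.Tendsto F Filter.atTop (nhds (1/2 * 0 ^ 2 + 15/2 * (0 ^ 4 * 0 ^ 2)
        - A * 0 + 1/2 * (0 * Sp) - 1/2 * 0 ^ 2)) := by
      exact ((((hPtop.pow 2).const_mul _).add (((hQtop.pow 4).mul (hPtop.pow 2)).const_mul _)).sub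
        (hPtop.const_mul A)).add ((hPtop.mul hStop).const_mul _) |>.sub
        ((hP'top.pow 2).const_mul _)
    norm_num at h
    exact h
  set c : ℝ := (1/2) * I with hcdef
  have hFbot : Filter.Tendsto F Filter.atBot (nhds (1/2 * c ^ 2 + 15/2 * (0 ^ 4 * c ^ 2)
      - A * c + 1/2 * (c * -Sm) - 1/2 * 0 ^ 2)) := by
    exact ((((hlim.pow 2).const_mul _).add (((hQbot.pow 4).mul (hlim.pow 2)).const_mul _)).sub
      (hlim.const_mul A)).add ((hlim.mul hSbot).const_mul _) |>.sub
      ((hP'bot.pow 2).const_mul _)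
  -- assembling everything by the fundamental theorem of calculus
  have hIoi : ∫ y in Set.Ioi (0:ℝ), (deriv (fun z => 10 * P z ^ 2 * Q z ^ 3) y
      + ((1 / 2) * P y + y * deriv P y)) * Q y = 0 - F 0 :=
    integral_Ioi_of_hasDerivAt_of_tendsto hFcont.continuousWithinAt
      (fun x _ => hFder x) hGint.integrableOn hFtop
  have hIic : ∫ y in Set.Iic (0:ℝ), (deriv (fun z => 10 * P z ^ 2 * Q z ^ 3) y
      + ((1 / 2) * P y + y * deriv P y)) * Q y
      = F 0 - (1/2 * c ^ 2 + 15/2 * (0 ^ 4 * c ^ 2) - A * c + 1/2 * (c * -Sm) - 1/2 * 0 ^ 2) :=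
    integral_Iic_of_hasDerivAt_of_tendsto hFcont.continuousWithinAt
      (fun x _ => hFder x) hGint.integrableOn hFbot
  have hsplit := intervalIntegral.integral_Iic_add_Ioi (b := (0:ℝ))
    hGint.integrableOn hGint.integrableOn
  rw [← hsplit, hIic, hIoi]
  clear_value F A c I Sp Sm
  rw [hA, hcdef]
  linear_combination (I / 4) * hIsum
end

section
/- Coercivity modulo three directions transfers under small perturbation: suppose L is a symmetric bilinear form on H¹(ℝ) and κ₀ > 0 a constant such that (Lf,f) ≥ κ₀‖f‖²_{H¹} − κ₀^{−1}[(f,g₁)² + (f,g₂)² + (f,g₃)²] for all f ∈ H¹, where g₁,g₂,g₃ ∈ L². If L̃ is another symmetric bilinear form and g̃ᵢ ∈ L² with |(L̃f,f) − (Lf,f)| ≤ δ‖f‖²_{H¹} and ‖g̃ᵢ − gᵢ‖_{L²} ≤ δ for all f and i, then for δ small enough (depending on κ₀ and ‖gᵢ‖_{L²}), there exists κ₁ > 0 with (L̃f,f) ≥ κ₁‖f‖²_{H¹} − κ₁^{−1}[(f,g̃₁)² + (f,g̃₂)² + (f,g̃₃)²] for all f ∈ H¹. -/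
open RealInnerProductSpace

theorem stmt_16 {E : Type*} [NormedAddCommGroup E] [InnerProductSpace ℝ E]
    (N : E → ℝ) (hN0 : ∀ f, 0 ≤ N f) (hNle : ∀ f, ‖f‖ ≤ N f)
    (Lq : E → ℝ) (g : Fin 3 → E) (κ₀ : ℝ) (hκ₀ : 0 < κ₀)
    (hcoer : ∀ f, κ₀ * (N f) ^ 2 - κ₀⁻¹ * (∑ i, (⟪f, g i⟫ : ℝ) ^ 2) ≤ Lq f) :
    ∃ δ > 0, ∀ (Lq' : E → ℝ) (g' : Fin 3 → E),
      (∀ f, |Lq' f - Lq f| ≤ δ * (N f) ^ 2) →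
      (∀ i, ‖g' i - g i‖ ≤ δ) →
      ∃ κ₁ > 0, ∀ f, κ₁ * (N f) ^ 2 - κ₁⁻¹ * (∑ i, (⟪f, g' i⟫ : ℝ) ^ 2) ≤ Lq' f := by
  refine ⟨κ₀ / 8, by positivity, ?_⟩
  intro Lq' g' hL hg
  refine ⟨κ₀ / 2, by positivity, ?_⟩
  intro f
  have hL' := abs_le.mp (hL f)
  have hLf := hcoer f
  have hnf := hNle f
  have hnf0 := norm_nonneg f
  have hsum : ∑ i, (⟪f, g i⟫ : ℝ) ^ 2
      ≤ ∑ i, (2 * (⟪f, g' i⟫ : ℝ) ^ 2 + 2 * (N f) ^ 2 * (κ₀ / 8) ^ 2) := by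
    apply Finset.sum_le_sum
    intro i _
    have h2 := abs_real_inner_le_norm f (g i - g' i)
    have h3 : ‖g i - g' i‖ ≤ κ₀ / 8 := by
      have := hg i; rwa [← norm_neg, neg_sub] at this
    have h4 : |(⟪f, g i - g' i⟫ : ℝ)| ≤ N f * (κ₀ / 8) :=
      h2.trans (mul_le_mul (hNle f) h3 (norm_nonneg _) (hN0 f))
    have h5 := pow_le_pow_left₀ (abs_nonneg (⟪f, g i - g' i⟫ : ℝ)) h4 2
    rw [sq_abs] at h5
    have h1 : (⟪f, g i - g' i⟫ : ℝ) ^ 2 ≤ (N f) ^ 2 * (κ₀ / 8) ^ 2 := by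
      nlinarith
    have heq : (⟪f, g i⟫ : ℝ) = ⟪f, g' i⟫ + ⟪f, g i - g' i⟫ := by
      rw [← inner_add_right]
      congr 1
      abel
    rw [heq]; nlinarith [sq_nonneg ((⟪f, g' i⟫ : ℝ) - (⟪f, g i - g' i⟫ : ℝ))]
  simp only [Finset.sum_add_distrib, Finset.sum_const, Finset.card_univ,
    Fintype.card_fin, nsmul_eq_mul] at hsum
  have hsum' : ∑ i, (⟪f, g i⟫ : ℝ) ^ 2
      ≤ 2 * ∑ i, (⟪f, g' i⟫ : ℝ) ^ 2 + 6 * (N f) ^ 2 * (κ₀ / 8) ^ 2 := by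
    rw [Finset.mul_sum]
    push_cast at hsum
    linarith
  have hpos : (0 : ℝ) < κ₀⁻¹ := inv_pos.mpr hκ₀
  have hinv : (κ₀ / 2)⁻¹ = 2 * κ₀⁻¹ := by field_simp
  rw [hinv]
  have hmul := mul_le_mul_of_nonneg_left hsum' (le_of_lt hpos)
  have hid : κ₀⁻¹ * κ₀ = 1 := inv_mul_cancel₀ (ne_of_gt hκ₀)
  nlinarith [sq_nonneg (N f), mul_pos hpos hκ₀]
end

section
/- Weighted Sobolev bound: there is a universal constant C such that for every f ∈ H¹(ℝ) and every C¹ weight φ : ℝ → (0,∞) with φ' > 0, ‖f²√(φ')‖²_{L^∞} ≤ C‖f‖²_{L²}( ∫ (f')² φ' + ∫ f² (φ'')²/φ' ), where the right side is assumed finite. -/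
/-!
With `w = φ'` and `g = f² √w`, one has `g' = 2 f f' √w + f² w' / (2 √w)`, so
`|g'| ≤ |f| v` with `v = 2 |f'| √w + |f| |w'| / (2 √w)`. Since `g → 0` at `-∞`,
`g y = ∫_{-∞}^y g'`, and Cauchy–Schwarz gives `g(y)² ≤ ‖f‖₂² ‖v‖₂²`; finally
`v² ≤ 17/4 (f'² w + f² w'² / w)` pointwise.
-/

open MeasureTheory Filter Topology

theorem sq_integral_mul_le_integral_sq_mul_integral_sq {α : Type*} [MeasurableSpace α]
    {μ : Measure α} {u v : α → ℝ} (hu : MemLp u 2 μ) (hv : MemLp v 2 μ) :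
    (∫ a, u a * v a ∂μ) ^ 2 ≤ (∫ a, u a ^ 2 ∂μ) * ∫ a, v a ^ 2 ∂μ := by
  have holder := integral_mul_norm_le_Lp_mul_Lq Real.HolderConjugate.two_two
    (by simpa using hu) (by simpa using hv)
  simp only [Real.norm_eq_abs, Real.rpow_two, sq_abs, ← Real.sqrt_eq_rpow] at holder
  calc (∫ a, u a * v a ∂μ) ^ 2 = |∫ a, u a * v a ∂μ| ^ 2 := (sq_abs _).symm
    _ ≤ (∫ a, |u a| * |v a| ∂μ) ^ 2 := by
      gcongr
      simpa only [abs_mul] using abs_integral_le_integral_abs (f := fun a => u a * v a)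
    _ ≤ (√(∫ a, u a ^ 2 ∂μ) * √(∫ a, v a ^ 2 ∂μ)) ^ 2 := by gcongr
    _ = (∫ a, u a ^ 2 ∂μ) * ∫ a, v a ^ 2 ∂μ := by
      rw [mul_pow, Real.sq_sqrt (integral_nonneg fun a => sq_nonneg _),
        Real.sq_sqrt (integral_nonneg fun a => sq_nonneg _)]

theorem abs_le_integral_abs_of_hasDerivAt_of_tendsto_atBot {g g' : ℝ → ℝ}
    (hg : ∀ x, HasDerivAt g (g' x) x) (hg' : Integrable g')
    (hlim : Tendsto g atBot (𝓝 0)) (y : ℝ) : |g y| ≤ ∫ x, |g' x| := by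
  have ftc : ∫ x in Set.Iic y, g' x = g y := by
    rw [integral_Iic_of_hasDerivAt_of_tendsto' (fun x _ => hg x) hg'.integrableOn hlim, sub_zero]
  calc |g y| = |∫ x in Set.Iic y, g' x| := by rw [ftc]
    _ ≤ ∫ x in Set.Iic y, |g' x| := abs_integral_le_integral_abs
    _ ≤ ∫ x, |g' x| := setIntegral_le_integral hg'.abs (ae_of_all _ fun x => abs_nonneg _)

theorem sq_le_integral_sq_mul_integral_sq_of_abs_deriv_le {g g' u v : ℝ → ℝ}
    (hg : ∀ x, HasDerivAt g (g' x) x) (hu : MemLp u 2) (hv : MemLp v 2)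
    (hg'_le : ∀ x, |g' x| ≤ |u x| * |v x|) (hlim : Tendsto g atBot (𝓝 0)) (y : ℝ) :
    g y ^ 2 ≤ (∫ x, u x ^ 2) * ∫ x, v x ^ 2 := by
  have huv : Integrable fun x => |u x| * |v x| := hu.abs.integrable_mul hv.abs
  have hg'_meas : AEStronglyMeasurable g' := by
    rw [← funext fun x => (hg x).deriv]
    exact (measurable_deriv g).aestronglyMeasurable
  have hg' : Integrable g' := huv.mono' hg'_meas (ae_of_all _ hg'_le)
  calc g y ^ 2 = |g y| ^ 2 := (sq_abs _).symm
    _ ≤ (∫ x, |u x| * |v x|) ^ 2 := by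
      gcongr
      exact (abs_le_integral_abs_of_hasDerivAt_of_tendsto_atBot hg hg' hlim y).trans
        (integral_mono hg'.abs huv hg'_le)
    _ ≤ (∫ x, |u x| ^ 2) * ∫ x, |v x| ^ 2 :=
      sq_integral_mul_le_integral_sq_mul_integral_sq hu.abs hv.abs
    _ = (∫ x, u x ^ 2) * ∫ x, v x ^ 2 := by simp only [sq_abs]

theorem HasDerivAt.sq_mul_sqrt {f w : ℝ → ℝ} {f' w' x : ℝ} (hf : HasDerivAt f f' x)
    (hw : HasDerivAt w w' x) (hwx : 0 < w x) :
    HasDerivAt (fun x => f x ^ 2 * √(w x))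
      (2 * f x * f' * √(w x) + f x ^ 2 * (w' / (2 * √(w x)))) x := by
  refine ((hf.pow 2).mul (hw.sqrt hwx.ne')).congr_deriv ?_
  simp only [Pi.pow_apply]
  ring

theorem abs_two_mul_mul_sqrt_add_le (a b c w : ℝ) (hw : 0 < w) :
    |2 * a * b * √w + a ^ 2 * (c / (2 * √w))| ≤
      |a| * (2 * |b| * √w + |a| * |c| / (2 * √w)) := by
  have hs : 0 < √w := Real.sqrt_pos.2 hw
  calc _ ≤ |2 * a * b * √w| + |a ^ 2 * (c / (2 * √w))| := abs_add_le _ _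
    _ = _ := by
      simp only [abs_mul, abs_div, abs_pow, abs_two, abs_of_pos hs]
      ring

/-- `17 / 4 = 2 ^ 2 + (1 / 2) ^ 2`: Cauchy–Schwarz in `ℝ²` for `2 p + q / 2`. -/
theorem sq_two_mul_sqrt_add_le (a b c w : ℝ) (hw : 0 < w) :
    (2 * |b| * √w + |a| * |c| / (2 * √w)) ^ 2 ≤
      17 / 4 * (b ^ 2 * w + a ^ 2 * c ^ 2 / w) := by
  set p := |b| * √w
  set q := |a| * |c| / √w
  have hp : p ^ 2 = b ^ 2 * w := by rw [mul_pow, sq_abs, Real.sq_sqrt hw.le]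
  have hq : q ^ 2 = a ^ 2 * c ^ 2 / w := by
    rw [div_pow, mul_pow, sq_abs, sq_abs, Real.sq_sqrt hw.le]
  have hpq : 2 * |b| * √w + |a| * |c| / (2 * √w) = 2 * p + q / 2 := by
    simp only [p, q]
    field_simp
  rw [hpq, ← hp, ← hq]
  nlinarith [sq_nonneg (p / 2 - 2 * q)]

theorem sq_sq_mul_sqrt_le {f w : ℝ → ℝ} (hf : Differentiable ℝ f) (hw : Differentiable ℝ w)
    (hw_pos : ∀ x, 0 < w x) (hf2 : Integrable fun x => f x ^ 2)
    (hfw : Integrable fun x => deriv f x ^ 2 * w x)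
    (hfw' : Integrable fun x => f x ^ 2 * deriv w x ^ 2 / w x)
    (hlim : Tendsto (fun x => f x ^ 2 * √(w x)) atBot (𝓝 0)) (y : ℝ) :
    (f y ^ 2 * √(w y)) ^ 2 ≤
      17 / 4 * (∫ x, f x ^ 2) *
        ((∫ x, deriv f x ^ 2 * w x) + ∫ x, f x ^ 2 * deriv w x ^ 2 / w x) := by
  set v := fun x => 2 * |deriv f x| * √(w x) + |f x| * |deriv w x| / (2 * √(w x))
  have hv_sq (x : ℝ) : v x ^ 2 ≤ 17 / 4 * (deriv f x ^ 2 * w x + f x ^ 2 * deriv w x ^ 2 / w x) :=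
    sq_two_mul_sqrt_add_le _ _ _ _ (hw_pos x)
  have hweighted : Integrable fun x =>
      17 / 4 * (deriv f x ^ 2 * w x + f x ^ 2 * deriv w x ^ 2 / w x) :=
    (hfw.add hfw').const_mul _
  have hv_meas : AEStronglyMeasurable v := by
    have := hf.continuous.measurable
    have := hw.continuous.measurable
    fun_prop
  have hv : MemLp v 2 := (memLp_two_iff_integrable_sq hv_meas).2 <|
    hweighted.mono' (hv_meas.pow 2) <| ae_of_all _ fun x => by
      rw [Real.norm_of_nonneg (sq_nonneg _)]
      exact hv_sq x
  have hf_L2 : MemLp f 2 := (memLp_two_iff_integrable_sq hf.continuous.aestronglyMeasurable).2 hf2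
  calc (f y ^ 2 * √(w y)) ^ 2
      ≤ (∫ x, f x ^ 2) * ∫ x, v x ^ 2 := by
        refine sq_le_integral_sq_mul_integral_sq_of_abs_deriv_le
          (fun x => (hf x).hasDerivAt.sq_mul_sqrt (hw x).hasDerivAt (hw_pos x)) hf_L2 hv
          (fun x => ?_) hlim y
        rw [abs_of_nonneg (show 0 ≤ v x by positivity)]
        exact abs_two_mul_mul_sqrt_add_le _ _ _ _ (hw_pos x)
    _ ≤ (∫ x, f x ^ 2) *
          ∫ x, 17 / 4 * (deriv f x ^ 2 * w x + f x ^ 2 * deriv w x ^ 2 / w x) :=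
        mul_le_mul_of_nonneg_left (integral_mono hv.integrable_sq hweighted hv_sq)
          (integral_nonneg fun x => sq_nonneg _)
    _ = _ := by rw [integral_const_mul, integral_add hfw hfw']; ring

theorem stmt_17 :
    ∃ C > 0, ∀ (f φ : ℝ → ℝ), ContDiff ℝ 1 f → ContDiff ℝ 2 φ →
      (∀ y, 0 < deriv φ y) →
      Integrable (fun x => (f x) ^ 2) →
      Integrable (fun x => (deriv f x) ^ 2) →
      Integrable (fun x => (deriv f x) ^ 2 * deriv φ x) →
      Integrable (fun x => (f x) ^ 2 * (deriv (deriv φ) x) ^ 2 / deriv φ x) →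
      Tendsto (fun y => (f y) ^ 2 * Real.sqrt (deriv φ y)) atBot (nhds 0) →
      ∀ y : ℝ, ((f y) ^ 2 * Real.sqrt (deriv φ y)) ^ 2 ≤
        C * (∫ x, (f x) ^ 2) *
          ((∫ x, (deriv f x) ^ 2 * deriv φ x)
            + ∫ x, (f x) ^ 2 * (deriv (deriv φ) x) ^ 2 / deriv φ x) := by
  refine ⟨17 / 4, by norm_num, fun f φ hf hφ hφ' hf2 _ hfw hfw' hlim => ?_⟩
  exact sq_sq_mul_sqrt_le (hf.differentiable one_ne_zero) hφ.differentiable_deriv_two hφ' hf2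
    hfw hfw' hlim
end
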